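/- arXiv:2103.09308 — 2 statements merged into one kernel-verified Lean document; each statement's English description precedes it below -/
import Mathlib

section
/- For any finite set P of n points in R^d, there exists a point c in R^d such that every closed halfspace containing c contains at least n/(d+1) points of P. -/
/-!
Call a subset `S ⊆ P` heavy if it misses fewer than `n/(d+1)` points of `P`. Any `d+1` heavy
subsets together miss fewer than `n` points, so they share a point of `P`; by Helly's theorem the
convex hulls of all heavy subsets then have a common point `c`. If a closed halfspace through `c`
contained fewer than `n/(d+1)` points, the points outside it would form a heavy subset whose hull
lies in the complementary open halfspace, which does not contain `c`.
-/

open Finset Module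

theorem Finset.exists_mem_forall_mem_of_sum_card_sdiff_lt {α : Type*} [DecidableEq α]
    {P : Finset α} {I : Finset (Finset α)} (h : ∑ S ∈ I, #(P \ S) < #P) :
    ∃ p ∈ P, ∀ S ∈ I, p ∈ S := by
  obtain ⟨p, hpP, hpU⟩ :=
    exists_mem_notMem_of_card_lt_card (card_biUnion_le.trans_lt h)
  refine ⟨p, hpP, fun S hS => ?_⟩
  by_contra hpS
  exact hpU (mem_biUnion.2 ⟨S, hS, mem_sdiff.2 ⟨hpP, hpS⟩⟩)

section Centerpoint

variable {𝕜 E : Type*} [Field 𝕜] [LinearOrder 𝕜] [IsStrictOrderedRing 𝕜]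
  [AddCommGroup E] [Module 𝕜 E] [FiniteDimensional 𝕜 E]

theorem exists_mem_convexHull_of_card_sdiff_lt [DecidableEq E] (P : Finset E) :
    ∃ c : E, ∀ S ⊆ P, (#(P \ S) : 𝕜) < #P / (finrank 𝕜 E + 1) →
      c ∈ convexHull 𝕜 (S : Set E) := by
  set heavy := {S ∈ P.powerset | (#(P \ S) : 𝕜) < #P / (finrank 𝕜 E + 1)}
  suffices (⋂ S ∈ heavy, convexHull 𝕜 (S : Set E)).Nonempty by
    obtain ⟨c, hc⟩ := this
    exact ⟨c, fun S hSP hS => Set.mem_iInter₂.1 hc S (mem_filter.2 ⟨mem_powerset.2 hSP, hS⟩)⟩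
  refine Convex.helly_theorem' (fun S _ => convex_convexHull 𝕜 _) fun I hI hIcard => ?_
  rcases I.eq_empty_or_nonempty with rfl | hIne
  · simp
  have hsum : (∑ S ∈ I, #(P \ S) : 𝕜) < #P :=
    calc (∑ S ∈ I, #(P \ S) : 𝕜)
        < ∑ _S ∈ I, (#P : 𝕜) / (finrank 𝕜 E + 1) :=
          sum_lt_sum_of_nonempty hIne fun S hS => (mem_filter.1 (hI hS)).2
      _ = #I * ((#P : 𝕜) / (finrank 𝕜 E + 1)) := by rw [sum_const, nsmul_eq_mul]
      _ ≤ (finrank 𝕜 E + 1) * ((#P : 𝕜) / (finrank 𝕜 E + 1)) := by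
          gcongr
          exact_mod_cast hIcard
      _ = #P := by field_simp
  obtain ⟨p, -, hp⟩ := exists_mem_forall_mem_of_sum_card_sdiff_lt (by exact_mod_cast hsum)
  exact ⟨p, Set.mem_iInter₂.2 fun S hS => subset_convexHull 𝕜 _ (hp S hS)⟩

theorem exists_centerpoint (P : Finset E) :
    ∃ c : E, ∀ (f : E →ₗ[𝕜] 𝕜) (a : 𝕜), f c ≤ a →
      (#P : 𝕜) / (finrank 𝕜 E + 1) ≤ #{p ∈ P | f p ≤ a} := by
  classical
  obtain ⟨c, hc⟩ := exists_mem_convexHull_of_card_sdiff_lt (𝕜 := 𝕜) P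
  refine ⟨c, fun f a hca => ?_⟩
  by_contra! hlt
  set S := {p ∈ P | a < f p}
  have hcompl : P \ S = {p ∈ P | f p ≤ a} := by
    ext x
    simp only [S, mem_sdiff, mem_filter, not_and, not_lt]
    tauto
  have hcS : c ∈ convexHull 𝕜 (S : Set E) :=
    hc S (filter_subset _ _) (by rwa [hcompl])
  have hS_above : (S : Set E) ⊆ {x | a < f x} := fun x hx => (mem_filter.1 hx).2
  exact (convexHull_min hS_above (convex_halfSpace_gt f.isLinear a) hcS).not_ge hca

end Centerpoint

/-- **Centerpoint theorem.** For any finite set `P` of `n` points in `ℝ^d`, there exists a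
point `c` such that every closed halfspace containing `c` contains at least `n/(d+1)`
points of `P`. -/
theorem centerpoint_exists (d : ℕ) (P : Finset (EuclideanSpace ℝ (Fin d))) :
    ∃ c : EuclideanSpace ℝ (Fin d),
      ∀ (v : EuclideanSpace ℝ (Fin d)) (a : ℝ), v ≠ 0 →
        (inner ℝ v c : ℝ) ≤ a →
        ((P.card : ℝ) / (d + 1)) ≤ (P.filter (fun p => (inner ℝ v p : ℝ) ≤ a)).card := by
  obtain ⟨c, hc⟩ := exists_centerpoint (𝕜 := ℝ) P
  refine ⟨c, fun v a _ hca => ?_⟩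
  have := hc (innerₗ _ v) a hca
  rw [finrank_euclideanSpace_fin] at this
  exact this
end

section
/- Let (X, R) be the range space where X = R^d and R is the set of all closed balls in R^d. Then the VC dimension of (X, R) is d + 1. -/
/-!
Lower bound: the origin together with an orthonormal family `v` is shattered. To cut out `T`,
centre the ball at `c = ∑_{v i ∈ T} v i`: then `‖v j - c‖² = ‖c‖² - 1` or `‖c‖² + 1` according
as `v j ∈ T` or not, and `‖0 - c‖² = ‖c‖²`, so the squared radius `‖c‖²` or `‖c‖² - 1/2` works.

Upper bound: more than `d + 1` points admit a Radon partition `T`, `S \ T` whose convex hulls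
meet. If closed balls `B₁`, `B₂` cut out `T` and `S \ T`, the function
`x ↦ dist x c₁ ^ 2 - dist x c₂ ^ 2` is affine and lies below `ρ₁² - ρ₂²` on `B₁ \ B₂ ⊇ T` and
above it on `B₂ \ B₁ ⊇ S \ T`, so a hyperplane separates the two hulls.
-/

def ShattersFam {α : Type*} (R : Set (Set α)) (S : Finset α) : Prop :=
  ∀ T ⊆ S, ∃ r ∈ R, ∀ x ∈ S, (x ∈ r ↔ x ∈ T)

def ballRanges (d : ℕ) : Set (Set (EuclideanSpace ℝ (Fin d))) :=
  { b | ∃ (c : EuclideanSpace ℝ (Fin d)) (ρ : ℝ), b = Metric.closedBall c ρ }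

open Finset Metric

def closedBallRanges (α : Type*) [PseudoMetricSpace α] : Set (Set α) :=
  {b | ∃ (c : α) (ρ : ℝ), b = closedBall c ρ}

theorem exists_closedBall_eq_setOf_dist_sq_le {α : Type*} [PseudoMetricSpace α] (c : α) (s : ℝ) :
    ∃ ρ, closedBall c ρ = {x | dist x c ^ 2 ≤ s} := by
  rcases le_or_gt 0 s with hs | hs
  · refine ⟨√s, Set.ext fun x => ?_⟩
    simp only [mem_closedBall, Set.mem_ofPred_eq, Real.le_sqrt dist_nonneg hs]
  · refine ⟨-1, Set.ext fun x => ?_⟩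
    simp only [mem_closedBall, Set.mem_ofPred_eq]
    exact iff_of_false (by linarith [dist_nonneg (x := x) (y := c)])
      (by nlinarith [sq_nonneg (dist x c)])

theorem dist_sq_sub_dist_sq_lt_of_mem_closedBall_of_notMem {α : Type*} [PseudoMetricSpace α]
    {x c₁ c₂ : α} {ρ₁ ρ₂ : ℝ} (h₁ : x ∈ closedBall c₁ ρ₁) (h₂ : x ∉ closedBall c₂ ρ₂)
    (hρ₂ : 0 ≤ ρ₂) : dist x c₁ ^ 2 - dist x c₂ ^ 2 < ρ₁ ^ 2 - ρ₂ ^ 2 := by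
  rw [mem_closedBall] at h₁ h₂
  have := pow_le_pow_left₀ dist_nonneg h₁ 2
  have := pow_lt_pow_left₀ (not_le.1 h₂) hρ₂ two_ne_zero
  linarith

section InnerProductSpace

variable {E : Type*} [NormedAddCommGroup E] [InnerProductSpace ℝ E]

open RealInnerProductSpace

theorem convex_setOf_dist_sq_sub_dist_sq_lt (c₁ c₂ : E) (r : ℝ) :
    Convex ℝ {x | dist x c₁ ^ 2 - dist x c₂ ^ 2 < r} := by
  have hset : {x | dist x c₁ ^ 2 - dist x c₂ ^ 2 < r} =
      {x | ⟪c₂ - c₁, x⟫ < (r - ‖c₁‖ ^ 2 + ‖c₂‖ ^ 2) / 2} := by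
    ext x
    simp only [Set.mem_ofPred_eq, dist_eq_norm, norm_sub_sq_real, inner_sub_left, real_inner_comm x]
    constructor <;> intro h <;> linarith
  rw [hset]
  exact convex_halfSpace_lt (innerₛₗ ℝ (c₂ - c₁)).isLinear _

theorem convexHull_closedBall_diff_subset (c₁ c₂ : E) (ρ₁ : ℝ) {ρ₂ : ℝ} (hρ₂ : 0 ≤ ρ₂) :
    convexHull ℝ (closedBall c₁ ρ₁ \ closedBall c₂ ρ₂) ⊆
      {x | dist x c₁ ^ 2 - dist x c₂ ^ 2 < ρ₁ ^ 2 - ρ₂ ^ 2} :=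
  convexHull_min (fun _ hx => dist_sq_sub_dist_sq_lt_of_mem_closedBall_of_notMem hx.1 hx.2 hρ₂)
    (convex_setOf_dist_sq_sub_dist_sq_lt c₁ c₂ _)

theorem disjoint_convexHull_closedBall_diff (c₁ c₂ : E) (ρ₁ ρ₂ : ℝ) :
    Disjoint (convexHull ℝ (closedBall c₁ ρ₁ \ closedBall c₂ ρ₂))
      (convexHull ℝ (closedBall c₂ ρ₂ \ closedBall c₁ ρ₁)) := by
  rcases (closedBall c₁ ρ₁ \ closedBall c₂ ρ₂).eq_empty_or_nonempty with h | ⟨x₁, hx₁⟩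
  · simp [h]
  rcases (closedBall c₂ ρ₂ \ closedBall c₁ ρ₁).eq_empty_or_nonempty with h | ⟨x₂, hx₂⟩
  · simp [h]
  have hρ₁ : 0 ≤ ρ₁ := nonneg_of_mem_closedBall hx₁.1
  have hρ₂ : 0 ≤ ρ₂ := nonneg_of_mem_closedBall hx₂.1
  refine Set.disjoint_left.2 fun x hx hx' => ?_
  have h₁ : dist x c₁ ^ 2 - dist x c₂ ^ 2 < ρ₁ ^ 2 - ρ₂ ^ 2 :=
    convexHull_closedBall_diff_subset c₁ c₂ ρ₁ hρ₂ hx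
  have h₂ : dist x c₂ ^ 2 - dist x c₁ ^ 2 < ρ₂ ^ 2 - ρ₁ ^ 2 :=
    convexHull_closedBall_diff_subset c₂ c₁ ρ₂ hρ₁ hx'
  linarith

end InnerProductSpace

theorem Finset.exists_convexHull_inter_convexHull_sdiff_nonempty {𝕜 E : Type*} [Field 𝕜]
    [LinearOrder 𝕜] [IsStrictOrderedRing 𝕜] [AddCommGroup E] [Module 𝕜 E]
    [FiniteDimensional 𝕜 E] [DecidableEq E] (S : Finset E)
    (hS : Module.finrank 𝕜 E + 1 < S.card) :
    ∃ T ⊆ S, (convexHull 𝕜 (T : Set E) ∩ convexHull 𝕜 ↑(S \ T)).Nonempty := by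
  classical
  have hdep : ¬AffineIndependent 𝕜 ((↑) : S → E) := fun hind => by
    have := hind.card_le_finrank_succ.trans
      (Nat.add_le_add_right (Submodule.finrank_le (vectorSpan 𝕜 (Set.range ((↑) : S → E)))) 1)
    simp only [Fintype.card_coe] at this
    omega
  obtain ⟨I, hI⟩ := Convex.radon_partition hdep
  refine ⟨S.filter (fun x => ∃ h : x ∈ S, ⟨x, h⟩ ∈ I), filter_subset _ _, ?_⟩
  convert hI using 3
  · ext x; simp
  · ext x
    simp only [coe_sdiff, coe_filter, Set.mem_sdiff, Set.mem_ofPred_eq, mem_coe, Set.mem_image,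
      Set.mem_compl_iff, Subtype.exists, exists_and_right, exists_eq_right]
    grind

theorem card_le_finrank_add_one_of_shattersFam_closedBallRanges {E : Type*}
    [NormedAddCommGroup E] [InnerProductSpace ℝ E] [FiniteDimensional ℝ E] {S : Finset E}
    (hS : ShattersFam (closedBallRanges E) S) : S.card ≤ Module.finrank ℝ E + 1 := by
  classical
  by_contra! hcard
  obtain ⟨T, hTS, p, hpT, hpST⟩ := S.exists_convexHull_inter_convexHull_sdiff_nonempty hcard
  obtain ⟨_, ⟨c₁, ρ₁, rfl⟩, h₁⟩ := hS T hTS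
  obtain ⟨_, ⟨c₂, ρ₂, rfl⟩, h₂⟩ := hS (S \ T) sdiff_subset
  have hT : (T : Set E) ⊆ closedBall c₁ ρ₁ \ closedBall c₂ ρ₂ := fun x hx =>
    ⟨(h₁ x (hTS hx)).2 hx, fun hx₂ => (mem_sdiff.1 ((h₂ x (hTS hx)).1 hx₂)).2 hx⟩
  have hST : (↑(S \ T) : Set E) ⊆ closedBall c₂ ρ₂ \ closedBall c₁ ρ₁ := by
    intro x hx
    obtain ⟨hxS, hxT⟩ := mem_sdiff.1 hx
    exact ⟨(h₂ x hxS).2 hx, fun hx₁ => hxT ((h₁ x hxS).1 hx₁)⟩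
  exact Set.disjoint_left.1 (disjoint_convexHull_closedBall_diff c₁ c₂ ρ₁ ρ₂)
    (convexHull_mono hT hpT) (convexHull_mono hST hpST)

section Orthonormal

variable {ι E : Type*} [Fintype ι] [NormedAddCommGroup E] [InnerProductSpace ℝ E] [DecidableEq E]
  {v : ι → E}

theorem Orthonormal.card_insert_zero_image_univ (hv : Orthonormal ℝ v) :
    (insert 0 (univ.image v)).card = Fintype.card ι + 1 := by
  rw [card_insert_of_notMem, card_image_of_injective _ hv.linearIndependent.injective, card_univ]
  simp only [mem_image, mem_univ, true_and, not_exists]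
  exact fun i => hv.ne_zero i

theorem Orthonormal.shattersFam_closedBallRanges_insert_zero (hv : Orthonormal ℝ v) :
    ShattersFam (closedBallRanges E) (insert 0 (univ.image v)) := by
  intro T _
  set l : ι → ℝ := fun i => if v i ∈ T then 1 else 0
  set c : E := ∑ i, l i • v i
  have hdist : ∀ j, dist (v j) c ^ 2 = ‖c‖ ^ 2 - 2 * l j + 1 := fun j => by
    rw [dist_eq_norm, norm_sub_sq_real, hv.inner_right_fintype, hv.1 j]
    ring
  obtain ⟨ρ, hρ⟩ := exists_closedBall_eq_setOf_dist_sq_le c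
    (if (0 : E) ∈ T then ‖c‖ ^ 2 else ‖c‖ ^ 2 - 1 / 2)
  refine ⟨_, ⟨c, ρ, rfl⟩, fun x hx => ?_⟩
  rw [hρ, Set.mem_ofPred_eq]
  rcases mem_insert.1 hx with rfl | hx
  · rw [dist_zero_left]
    split_ifs with h0 <;> simp [h0]
  · obtain ⟨j, -, rfl⟩ := mem_image.1 hx
    rw [hdist j]
    by_cases hj : v j ∈ T <;> split_ifs <;> simp [l, hj] <;> linarith

end Orthonormal

/-- **VC dimension of balls.** The range space of closed balls in `ℝ^d` has VC dimension
exactly `d + 1`: some set of `d + 1` points is shattered, and no set of more than `d + 1`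
points is shattered. -/
theorem vc_dim_balls (d : ℕ) :
    (∃ S : Finset (EuclideanSpace ℝ (Fin d)),
        S.card = d + 1 ∧ ShattersFam (ballRanges d) S) ∧
    (∀ S : Finset (EuclideanSpace ℝ (Fin d)),
        ShattersFam (ballRanges d) S → S.card ≤ d + 1) := by
  classical
  have hv := (EuclideanSpace.basisFun (Fin d) ℝ).orthonormal
  refine ⟨⟨_, ?_, hv.shattersFam_closedBallRanges_insert_zero⟩, fun S hS => ?_⟩
  · simpa using hv.card_insert_zero_image_univ
  · simpa using card_le_finrank_add_one_of_shattersFam_closedBallRanges hS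
end
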